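/- arXiv:1507.07846 — 3 statements merged into one kernel-verified Lean document; each statement's English description precedes it below -/
import Mathlib

section
/- For every τ with 0 ≤ τ < 1/2, the integral ∫_{ℝ³} (1+|ξ|²)^τ (1+ξ₁²)^{-1} (1+ξ₂²)^{-1} (1+ξ₃²)^{-1} dξ is finite. -/
/-!
Since `1 + ∑ᵢ ξᵢ² ≤ ∏ᵢ (1 + ξᵢ²)` and `τ ≥ 0`, the integrand is dominated by the tensor product
`∏ᵢ (1 + ξᵢ²)^(τ - 1)`, whose integral is the product of the one-dimensional integrals
`∫ (1 + x²)^(τ - 1) dx`; these converge exactly when `2 (1 - τ) > 1`, i.e. `τ < 1/2`.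
-/

open MeasureTheory

lemma Finset.one_add_sum_le_prod_one_add {ι R : Type*} [CommSemiring R] [PartialOrder R]
    [IsOrderedRing R] (s : Finset ι) {f : ι → R} (hf : ∀ i ∈ s, 0 ≤ f i) :
    1 + ∑ i ∈ s, f i ≤ ∏ i ∈ s, (1 + f i) := by
  classical
  induction s using Finset.induction_on with
  | empty => simp
  | insert a s ha ih =>
    have hfa : 0 ≤ f a := hf a (Finset.mem_insert_self a s)
    have hs : ∀ i ∈ s, 0 ≤ f i := fun i hi => hf i (Finset.mem_insert_of_mem hi)
    rw [Finset.sum_insert ha, Finset.prod_insert ha]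
    calc 1 + (f a + ∑ i ∈ s, f i)
        ≤ (1 + f a) * (1 + ∑ i ∈ s, f i) := by
          rw [show (1 + f a) * (1 + ∑ i ∈ s, f i) = 1 + (f a + ∑ i ∈ s, f i) + f a * ∑ i ∈ s, f i
            by ring]
          exact le_add_of_nonneg_right (mul_nonneg hfa (Finset.sum_nonneg hs))
      _ ≤ (1 + f a) * ∏ i ∈ s, (1 + f i) :=
          mul_le_mul_of_nonneg_left (ih hs) (add_nonneg zero_le_one hfa)

lemma EuclideanSpace.one_add_norm_sq_le_prod {ι : Type*} [Fintype ι] (ξ : EuclideanSpace ℝ ι) :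
    1 + ‖ξ‖ ^ 2 ≤ ∏ i, (1 + ξ i ^ 2) := by
  simpa [EuclideanSpace.norm_sq_eq] using
    Finset.univ.one_add_sum_le_prod_one_add fun i _ => sq_nonneg (ξ i)

lemma integrable_one_add_sq_rpow {r : ℝ} (hr : r < -1 / 2) :
    Integrable fun x : ℝ => (1 + x ^ 2) ^ r := by
  have h := integrable_rpow_neg_one_add_norm_sq (E := ℝ) (μ := volume) (r := -2 * r)
    (by simp only [Module.finrank_self, Nat.cast_one]; linarith)
  simpa [sq_abs, show -(-2 * r) / 2 = r by ring] using h

lemma EuclideanSpace.integrable_prod_one_add_sq_rpow {ι : Type*} [Fintype ι] {r : ℝ}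
    (hr : r < -1 / 2) :
    Integrable fun ξ : EuclideanSpace ℝ ι => ∏ i, (1 + ξ i ^ 2) ^ r := by
  have hpi : Integrable (fun x : ι → ℝ => ∏ i, (1 + x i ^ 2) ^ r) :=
    Integrable.fintype_prod (f := fun _ x => (1 + x ^ 2) ^ r) fun _ => integrable_one_add_sq_rpow hr
  exact ((EuclideanSpace.volume_preserving_symm_measurableEquiv_toLp ι).integrable_comp_emb
    (MeasurableEquiv.measurableEmbedding _)).mpr hpi

lemma EuclideanSpace.one_add_norm_sq_rpow_mul_prod_inv_le {ι : Type*} [Fintype ι] {τ : ℝ}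
    (hτ : 0 ≤ τ) (ξ : EuclideanSpace ℝ ι) :
    (1 + ‖ξ‖ ^ 2) ^ τ * ∏ i, (1 + ξ i ^ 2)⁻¹ ≤ ∏ i, (1 + ξ i ^ 2) ^ (τ - 1) := by
  have hpos : ∀ i, 0 < 1 + ξ i ^ 2 := fun i => by positivity
  calc (1 + ‖ξ‖ ^ 2) ^ τ * ∏ i, (1 + ξ i ^ 2)⁻¹
      ≤ (∏ i, (1 + ξ i ^ 2)) ^ τ * ∏ i, (1 + ξ i ^ 2)⁻¹ := by
        gcongr
        exact ξ.one_add_norm_sq_le_prod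
    _ = ∏ i, (1 + ξ i ^ 2) ^ (τ - 1) := by
        rw [← Real.finsetProd_rpow _ _ fun i _ => (hpos i).le, ← Finset.prod_mul_distrib]
        exact Finset.prod_congr rfl fun i _ => (Real.rpow_sub_one (hpos i).ne' τ).symm

theorem EuclideanSpace.integrable_one_add_norm_sq_rpow_mul_prod_inv {ι : Type*} [Fintype ι]
    {τ : ℝ} (hτ0 : 0 ≤ τ) (hτ : τ < 1 / 2) :
    Integrable fun ξ : EuclideanSpace ℝ ι => (1 + ‖ξ‖ ^ 2) ^ τ * ∏ i, (1 + ξ i ^ 2)⁻¹ := by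
  refine (integrable_prod_one_add_sq_rpow (r := τ - 1) (by linarith)).mono' (by fun_prop)
    (ae_of_all _ fun ξ => ?_)
  rw [Real.norm_of_nonneg (by positivity)]
  exact one_add_norm_sq_rpow_mul_prod_inv_le hτ0 ξ

/-- The key integrability computation in the proof of Lemma 3.3:
`∫_{ℝ³} (1+|ξ|²)^τ (1+ξ₁²)⁻¹ (1+ξ₂²)⁻¹ (1+ξ₃²)⁻¹ dξ < ∞` for `0 ≤ τ < 1/2`. -/
theorem weighted_integral_finite
    (τ : ℝ) (hτ0 : 0 ≤ τ) (hτ : τ < 1 / 2) :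
    ∫⁻ ξ : EuclideanSpace ℝ (Fin 3),
      ENNReal.ofReal ((1 + ‖ξ‖ ^ 2) ^ τ *
        (1 + ξ 0 ^ 2)⁻¹ * (1 + ξ 1 ^ 2)⁻¹ * (1 + ξ 2 ^ 2)⁻¹) < ⊤ := by
  simpa only [Fin.prod_univ_three, mul_assoc] using
    (EuclideanSpace.integrable_one_add_norm_sq_rpow_mul_prod_inv (ι := Fin 3) hτ0 hτ).lintegral_lt_top
end

section
/- Let N ≥ 1, let W ⊆ ℝᴺ be measurable, let H : ℝᴺ → ℂ be a homogeneous polynomial of degree n, and let R > 0, δ > 0. Then there exists a constant C (depending only on H, δ, R and N) such that for every τ ≥ 1 and every ρ ∈ ℂᴺ with Re(ρ)·x ≥ τδ|x| for all x ∈ W, the function x ↦ e^{-ρ·x} H(x) is Lebesgue-integrable on W and |∫_{W ∩ {|x| ≥ R}} e^{-ρ·x} H(x) dx| ≤ C e^{-τδR/2}. -/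
/-!
Homogeneity gives `|H(x)| ≤ M |x|ⁿ`, so wherever `Re ρ · x ≥ τδ|x|` the integrand is bounded by
`M |x|ⁿ e^{-τδ|x|}`. For `τ ≥ 1` and `|x| ≥ R` this is at most `e^{-τδR/2} · M |x|ⁿ e^{-δ|x|/2}`,
and the last function is integrable over `ℝᴺ` with an integral independent of `τ` and `ρ`.
-/

open MeasureTheory Set

namespace MvPolynomial

theorem IsHomogeneous.norm_eval_le {σ 𝕜 : Type*} [NormedField 𝕜] {φ : MvPolynomial σ 𝕜}
    {n : ℕ} (hφ : φ.IsHomogeneous n) {x : σ → 𝕜} {r : ℝ} (hx : ∀ i, ‖x i‖ ≤ r) :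
    ‖eval x φ‖ ≤ (∑ d ∈ φ.support, ‖φ.coeff d‖) * r ^ n := by
  rw [eval_eq, Finset.sum_mul]
  refine (norm_sum_le _ _).trans (Finset.sum_le_sum fun d hd => ?_)
  rw [norm_mul, norm_prod]
  gcongr
  calc ∏ i ∈ d.support, ‖x i ^ d i‖ ≤ ∏ i ∈ d.support, r ^ d i := by
        gcongr with i
        rw [norm_pow]
        exact pow_le_pow_left₀ (norm_nonneg _) (hx i) _
    _ = r ^ n := by
        rw [Finset.prod_pow_eq_pow_sum, ← hφ (mem_support_iff.mp hd), ← Finsupp.degree_apply,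
          Finsupp.degree_eq_weight_one]
        rfl

end MvPolynomial

theorem integrable_pow_mul_exp_neg_mul_norm {E : Type*} [NormedAddCommGroup E]
    [NormedSpace ℝ E] [FiniteDimensional ℝ E] [MeasurableSpace E] [BorelSpace E]
    (μ : Measure E) [μ.IsAddHaarMeasure] (n : ℕ) {b : ℝ} (hb : 0 < b) :
    Integrable (fun x : E => ‖x‖ ^ n * Real.exp (-(b * ‖x‖))) μ := by
  rcases subsingleton_or_nontrivial E with hE | hE
  · exact (by fun_prop : Continuous _).integrable_of_hasCompactSupport
      (HasCompactSupport.of_compactSpace _)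
  · rw [integrable_fun_norm_addHaar μ (f := fun t => t ^ n * Real.exp (-(b * t)))]
    refine (integrableOn_rpow_mul_exp_neg_mul_rpow (s := ((Module.finrank ℝ E - 1 + n : ℕ) : ℝ))
      (neg_one_lt_zero.trans_le (Nat.cast_nonneg _)) one_pos hb).congr_fun (fun t _ => ?_)
      measurableSet_Ioi
    simp only [Real.rpow_natCast, Real.rpow_one, pow_add, mul_assoc, neg_mul, smul_eq_mul]

theorem norm_exp_neg_sum_mul_ofReal {ι : Type*} [Fintype ι] (ρ : ι → ℂ) (x : ι → ℝ) :
    ‖Complex.exp (-(∑ j, ρ j * (x j : ℂ)))‖ = Real.exp (-(∑ j, (ρ j).re * x j)) := by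
  simp [Complex.norm_exp, Complex.re_sum]

theorem Real.exp_neg_mul_le_exp_neg_mul_exp_neg {τ δ R t : ℝ} (hτ : 1 ≤ τ) (hδ : 0 ≤ δ)
    (hRt : R ≤ t) (ht : 0 ≤ t) :
    Real.exp (-(τ * δ * t)) ≤ Real.exp (-(τ * δ * R / 2)) * Real.exp (-(δ / 2 * t)) := by
  rw [← Real.exp_add]
  gcongr
  nlinarith [mul_nonneg (sub_nonneg.2 hτ) (mul_nonneg hδ ht),
    mul_nonneg (mul_nonneg (zero_le_one.trans hτ) hδ) (sub_nonneg.2 hRt)]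

theorem norm_exp_neg_mul_eval_le {ι : Type*} [Fintype ι] {n : ℕ} {H : MvPolynomial ι ℂ}
    (hH : H.IsHomogeneous n) {ρ : ι → ℂ} {c : ℝ} {x : EuclideanSpace ℝ ι}
    (hx : c * ‖x‖ ≤ ∑ j, (ρ j).re * x j) :
    ‖Complex.exp (-(∑ j, ρ j * (x j : ℂ))) * MvPolynomial.eval (fun j => ((x j : ℝ) : ℂ)) H‖ ≤
      (∑ d ∈ H.support, ‖H.coeff d‖) * (‖x‖ ^ n * Real.exp (-(c * ‖x‖))) := by
  rw [norm_mul, norm_exp_neg_sum_mul_ofReal]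
  have hH' := hH.norm_eval_le (x := fun j => ((x j : ℝ) : ℂ)) (r := ‖x‖)
    fun j => by simpa using PiLp.norm_apply_le x j
  calc _ ≤ Real.exp (-(c * ‖x‖)) * ((∑ d ∈ H.support, ‖H.coeff d‖) * ‖x‖ ^ n) := by
        gcongr
    _ = _ := by ring

theorem norm_exp_neg_mul_eval_le_of_le_norm {ι : Type*} [Fintype ι] {n : ℕ}
    {H : MvPolynomial ι ℂ} (hH : H.IsHomogeneous n) {ρ : ι → ℂ} {τ δ r : ℝ} (hτ : 1 ≤ τ)
    (hδ : 0 ≤ δ) {x : EuclideanSpace ℝ ι} (hx : τ * δ * ‖x‖ ≤ ∑ j, (ρ j).re * x j)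
    (hr : r ≤ ‖x‖) :
    ‖Complex.exp (-(∑ j, ρ j * (x j : ℂ))) * MvPolynomial.eval (fun j => ((x j : ℝ) : ℂ)) H‖ ≤
      Real.exp (-(τ * δ * r / 2)) *
        ((∑ d ∈ H.support, ‖H.coeff d‖) * (‖x‖ ^ n * Real.exp (-(δ / 2 * ‖x‖)))) := by
  calc _ ≤ (∑ d ∈ H.support, ‖H.coeff d‖) * (‖x‖ ^ n * Real.exp (-(τ * δ * ‖x‖))) :=
        norm_exp_neg_mul_eval_le hH hx
    _ ≤ (∑ d ∈ H.support, ‖H.coeff d‖) *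
          (‖x‖ ^ n * (Real.exp (-(τ * δ * r / 2)) * Real.exp (-(δ / 2 * ‖x‖)))) := by
        gcongr
        exact Real.exp_neg_mul_le_exp_neg_mul_exp_neg hτ hδ hr (norm_nonneg x)
    _ = _ := by ring

theorem laplace_transform_tail_estimate_general
    (N : ℕ)
    (W : Set (EuclideanSpace ℝ (Fin N)))
    (n : ℕ) (H : MvPolynomial (Fin N) ℂ) (hH : H.IsHomogeneous n)
    (R δ : ℝ) (hδ : 0 < δ) :
    ∃ C : ℝ, ∀ τ : ℝ, 1 ≤ τ → ∀ ρ : Fin N → ℂ,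
      (∀ x ∈ W, τ * δ * ‖x‖ ≤ ∑ j, (ρ j).re * x j) →
      IntegrableOn
        (fun x : EuclideanSpace ℝ (Fin N) =>
          Complex.exp (-(∑ j, ρ j * (x j : ℂ))) *
            MvPolynomial.eval (fun j => ((x j : ℝ) : ℂ)) H) W volume ∧
      ‖∫ x in W ∩ {x : EuclideanSpace ℝ (Fin N) | R ≤ ‖x‖},
          Complex.exp (-(∑ j, ρ j * (x j : ℂ))) *
            MvPolynomial.eval (fun j => ((x j : ℝ) : ℂ)) H‖ ≤
        C * Real.exp (-(τ * δ * R / 2)) := by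
  set g := fun x : EuclideanSpace ℝ (Fin N) =>
    (∑ d ∈ H.support, ‖H.coeff d‖) * (‖x‖ ^ n * Real.exp (-(δ / 2 * ‖x‖)))
  have hg : Integrable g :=
    (integrable_pow_mul_exp_neg_mul_norm volume n (by positivity)).const_mul _
  refine ⟨∫ x, g x, fun τ hτ ρ hρ => ?_⟩
  set f := fun x : EuclideanSpace ℝ (Fin N) =>
    Complex.exp (-(∑ j, ρ j * (x j : ℂ))) * MvPolynomial.eval (fun j => ((x j : ℝ) : ℂ)) H
  have hf : Continuous f := by
    have := MvPolynomial.continuous_eval H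
    fun_prop
  -- The pointwise bounds are proved on the closed, hence measurable, set `K ⊇ W`.
  set K := {x : EuclideanSpace ℝ (Fin N) | τ * δ * ‖x‖ ≤ ∑ j, (ρ j).re * x j}
  have hbound : ∀ r : ℝ, ∀ s ⊆ K ∩ {x | r ≤ ‖x‖},
      ∀ᵐ x ∂volume.restrict s, ‖f x‖ ≤ Real.exp (-(τ * δ * r / 2)) * g x := fun r s hs =>
    ae_restrict_of_ae_restrict_of_subset hs <| ae_restrict_of_forall_mem
      ((isClosed_le (by fun_prop) (by fun_prop)).inter
        (isClosed_le continuous_const continuous_norm)).measurableSet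
      fun x hx => norm_exp_neg_mul_eval_le_of_le_norm hH hτ hδ.le hx.1 hx.2
  constructor
  · exact (hg.const_mul _).integrableOn.mono' hf.aestronglyMeasurable.restrict
      (hbound 0 W fun x hx => ⟨hρ x hx, norm_nonneg x⟩)
  · calc ‖∫ x in W ∩ {x | R ≤ ‖x‖}, f x‖
        ≤ ∫ x in W ∩ {x | R ≤ ‖x‖}, Real.exp (-(τ * δ * R / 2)) * g x :=
          norm_integral_le_of_norm_le (hg.const_mul _).integrableOn
            (hbound R _ (inter_subset_inter_left _ hρ))
      _ ≤ ∫ x, Real.exp (-(τ * δ * R / 2)) * g x :=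
          setIntegral_le_integral (hg.const_mul _) (ae_of_all _ fun x => by positivity)
      _ = (∫ x, g x) * Real.exp (-(τ * δ * R / 2)) := by rw [integral_const_mul, mul_comm]

/-- The exponential tail estimate (formula (eq:6)): for a homogeneous polynomial `H`
of degree `n` and `ρ ∈ ℂᴺ` with `Re(ρ)·x ≥ τδ|x|` on `W`, the Laplace-type integrand
is integrable on `W` and its integral over `W ∩ {|x| ≥ R}` is `O(e^{-τδR/2})`,
uniformly in `τ ≥ 1`. -/
theorem laplace_transform_tail_estimate
    (N : ℕ) (hN : 1 ≤ N)
    (W : Set (EuclideanSpace ℝ (Fin N))) (hWmeas : MeasurableSet W)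
    (n : ℕ) (H : MvPolynomial (Fin N) ℂ) (hH : H.IsHomogeneous n)
    (R δ : ℝ) (hR : 0 < R) (hδ : 0 < δ) :
    ∃ C : ℝ, ∀ τ : ℝ, 1 ≤ τ → ∀ ρ : Fin N → ℂ,
      (∀ x ∈ W, τ * δ * ‖x‖ ≤ ∑ j, (ρ j).re * x j) →
      IntegrableOn
        (fun x : EuclideanSpace ℝ (Fin N) =>
          Complex.exp (-(∑ j, ρ j * (x j : ℂ))) *
            MvPolynomial.eval (fun j => ((x j : ℝ) : ℂ)) H) W volume ∧
      ‖∫ x in W ∩ {x : EuclideanSpace ℝ (Fin N) | R ≤ ‖x‖},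
          Complex.exp (-(∑ j, ρ j * (x j : ℂ))) *
            MvPolynomial.eval (fun j => ((x j : ℝ) : ℂ)) H‖ ≤
        C * Real.exp (-(τ * δ * R / 2)) :=
  laplace_transform_tail_estimate_general N W n H hH R δ hδ
end

section
/- Let N ≥ 2, let W ⊆ ℝᴺ be a measurable cone (tx ∈ W whenever x ∈ W and t > 0), let H : ℝᴺ → ℂ be a homogeneous polynomial of degree n, let k ≥ 0, and let ω, ω⊥ ∈ ℝᴺ be orthonormal unit vectors such that ω·x ≥ δ|x| for all x ∈ W, for some δ > 0. For τ > 0 set ρ_τ = τω + i(τ²+k²)^{1/2}ω⊥ ∈ ℂᴺ, and let F(z) = ∫_W e^{-z·x}H(x)dx (the integral converges whenever Re(z)·x ≥ c|x| on W for some c>0). If there exist C ≥ 0, ε > 0 and τ₀ > 0 such that |F(ρ_τ)| ≤ C τ^{-(n+N)-ε} for all τ ≥ τ₀, then F(ω + iω⊥) = 0. -/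
open MeasureTheory Set
open scoped InnerProductSpace

/-!
Write `ρ_τ = τ • z(s_τ)` with `z(s) = ω + i s ω⊥` and `s_τ = √(τ² + k²) / τ → 1`. Scaling the cone
variable shows `F(τ • z) = τ^{-(n+N)} F(z)`, so the hypothesis gives `F(z(s_τ)) = O(τ^{-ε}) → 0`.
Along `z(s)` the modulus `e^{-ω·x} |H(x)|` of the integrand does not depend on `s`, so by dominated
convergence `s ↦ F(z(s))` is continuous, and `F(z(1)) = lim F(z(s_τ)) = 0`.
-/

namespace MvPolynomial

theorem IsHomogeneous.eval_smul {σ R : Type*} [CommSemiring R] {φ : MvPolynomial σ R} {n : ℕ}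
    (hφ : φ.IsHomogeneous n) (c : R) (v : σ → R) : eval (c • v) φ = c ^ n * eval v φ := by
  rw [eval_eq, eval_eq, Finset.mul_sum]
  refine Finset.sum_congr rfl fun d hd => ?_
  have hdeg : ∑ i ∈ d.support, d i = n := by
    simpa [Finsupp.weight_apply, Finsupp.sum] using hφ (mem_support_iff.mp hd)
  simp only [Pi.smul_apply, smul_eq_mul, mul_pow, Finset.prod_mul_distrib,
    Finset.prod_pow_eq_pow_sum, hdeg]
  ring

end MvPolynomial

open scoped Pointwise in
theorem smul_set_eq_self_of_cone {E : Type*} [MulAction ℝ E] {W : Set E}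
    (hW : ∀ x ∈ W, ∀ t : ℝ, 0 < t → t • x ∈ W) {t : ℝ} (ht : 0 < t) : t • W = W := by
  refine (Set.smul_set_subset_iff.2 fun x hx => hW x hx t ht).antisymm fun x hx => ?_
  exact ⟨t⁻¹ • x, hW x hx _ (inv_pos.2 ht), smul_inv_smul₀ ht.ne' x⟩

section Laplace

variable {N : ℕ}

noncomputable def laplaceIntegrand (H : MvPolynomial (Fin N) ℂ) (z : Fin N → ℂ)
    (x : EuclideanSpace ℝ (Fin N)) : ℂ :=
  Complex.exp (-(∑ j, z j * (x j : ℂ))) * MvPolynomial.eval (fun j => ((x j : ℝ) : ℂ)) H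

noncomputable def laplaceOn (W : Set (EuclideanSpace ℝ (Fin N))) (H : MvPolynomial (Fin N) ℂ)
    (z : Fin N → ℂ) : ℂ :=
  ∫ x in W, laplaceIntegrand H z x

theorem laplaceIntegrand_smul {H : MvPolynomial (Fin N) ℂ} {n : ℕ} (hH : H.IsHomogeneous n)
    (z : Fin N → ℂ) (t : ℝ) (x : EuclideanSpace ℝ (Fin N)) :
    laplaceIntegrand H z (t • x) = (t : ℂ) ^ n * laplaceIntegrand H (t • z) x := by
  have hx : (fun j => (((t • x) j : ℝ) : ℂ)) = (t : ℂ) • fun j => ((x j : ℝ) : ℂ) := by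
    ext j; simp
  have hsum : ∑ j, z j * (((t • x) j : ℝ) : ℂ) = ∑ j, (t • z) j * ((x j : ℝ) : ℂ) := by
    refine Finset.sum_congr rfl fun j _ => ?_
    simp only [PiLp.smul_apply, smul_eq_mul, Pi.smul_apply, Complex.real_smul, Complex.ofReal_mul]
    ring
  rw [laplaceIntegrand, laplaceIntegrand, hx, hH.eval_smul, hsum]
  ring

open scoped Pointwise in
theorem laplaceOn_smul {W : Set (EuclideanSpace ℝ (Fin N))}
    (hW : ∀ x ∈ W, ∀ t : ℝ, 0 < t → t • x ∈ W) {H : MvPolynomial (Fin N) ℂ} {n : ℕ}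
    (hH : H.IsHomogeneous n) (z : Fin N → ℂ) {t : ℝ} (ht : 0 < t) :
    (t : ℂ) ^ (n + N) * laplaceOn W H (t • z) = laplaceOn W H z := by
  have hchange := Measure.setIntegral_comp_smul_of_pos volume (laplaceIntegrand H z) W ht
  rw [smul_set_eq_self_of_cone hW ht, finrank_euclideanSpace_fin] at hchange
  simp only [laplaceIntegrand_smul hH, integral_const_mul] at hchange
  rw [Complex.real_smul, Complex.ofReal_inv, Complex.ofReal_pow] at hchange
  rw [laplaceOn, laplaceOn, pow_add, mul_comm ((t : ℂ) ^ n), mul_assoc, hchange,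
    mul_inv_cancel_left₀ (pow_ne_zero N (Complex.ofReal_ne_zero.2 ht.ne'))]

theorem norm_laplaceOn_le_of_norm_laplaceOn_smul_le {W : Set (EuclideanSpace ℝ (Fin N))}
    (hW : ∀ x ∈ W, ∀ t : ℝ, 0 < t → t • x ∈ W) {H : MvPolynomial (Fin N) ℂ} {n : ℕ}
    (hH : H.IsHomogeneous n) {z : Fin N → ℂ} {t C ε : ℝ} (ht : 0 < t)
    (hdecay : ‖laplaceOn W H (t • z)‖ ≤ C * t ^ (-((n : ℝ) + N) - ε)) :
    ‖laplaceOn W H z‖ ≤ C * t ^ (-ε) :=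
  calc ‖laplaceOn W H z‖ = t ^ (n + N) * ‖laplaceOn W H (t • z)‖ := by
        rw [← laplaceOn_smul hW hH z ht, norm_mul, norm_pow, Complex.norm_real,
          Real.norm_of_nonneg ht.le]
    _ ≤ t ^ (n + N) * (C * t ^ (-((n : ℝ) + N) - ε)) := by gcongr
    _ = C * t ^ (-ε) := by
        rw [mul_left_comm, ← Real.rpow_natCast, ← Real.rpow_add ht]; push_cast; ring_nf

theorem norm_laplaceIntegrand (H : MvPolynomial (Fin N) ℂ) (z : Fin N → ℂ)
    (x : EuclideanSpace ℝ (Fin N)) :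
    ‖laplaceIntegrand H z x‖ =
      Real.exp (-∑ j, (z j).re * x j) * ‖MvPolynomial.eval (fun j => ((x j : ℝ) : ℂ)) H‖ := by
  simp [laplaceIntegrand, Complex.norm_exp, Complex.re_sum]

theorem continuous_laplaceOn_add_I_mul {W : Set (EuclideanSpace ℝ (Fin N))}
    {H : MvPolynomial (Fin N) ℂ} {a : Fin N → ℝ}
    (ha : IntegrableOn (laplaceIntegrand H fun j => (a j : ℂ)) W) :
    Continuous fun y : Fin N → ℝ =>
      laplaceOn W H fun j => (a j : ℂ) + Complex.I * (y j : ℂ) := by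
  refine continuous_of_dominated (bound := fun x => ‖laplaceIntegrand H (fun j => (a j : ℂ)) x‖)
    (fun y => ?_) (fun y => .of_forall fun x => ?_) ha.norm (.of_forall fun x => ?_)
  · exact ((Continuous.cexp (by fun_prop)).mul
      ((MvPolynomial.continuous_eval H).comp (by fun_prop))).aestronglyMeasurable
  · simp [norm_laplaceIntegrand]
  · unfold laplaceIntegrand; fun_prop

end Laplace

open Filter Topology in
theorem tendsto_sqrt_sq_add_sq_div_self_atTop (k : ℝ) :
    Tendsto (fun τ : ℝ => √(τ ^ 2 + k ^ 2) / τ) atTop (𝓝 1) := by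
  have hlim : Tendsto (fun τ : ℝ => √(1 + (k / τ) ^ 2)) atTop (𝓝 1) := by
    simpa using ((tendsto_const_nhds.div_atTop tendsto_id).pow 2).const_add 1 |>.sqrt
  refine hlim.congr' ?_
  filter_upwards [eventually_gt_atTop 0] with τ hτ
  have hfactor : τ ^ 2 + k ^ 2 = (1 + (k / τ) ^ 2) * τ ^ 2 := by field_simp
  rw [hfactor, Real.sqrt_mul (by positivity), Real.sqrt_sq hτ.le]
  field_simp

open Filter Topology in
theorem laplace_transform_vanishing_general
    (N : ℕ)
    (W : Set (EuclideanSpace ℝ (Fin N)))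
    (hWcone : ∀ x ∈ W, ∀ t : ℝ, 0 < t → t • x ∈ W)
    (n : ℕ) (H : MvPolynomial (Fin N) ℂ) (hH : H.IsHomogeneous n)
    (k : ℝ)
    (ω ωperp : EuclideanSpace ℝ (Fin N))
    (δ : ℝ) (hδ : 0 < δ)
    (hWω : ∀ x ∈ W, δ * ‖x‖ ≤ ∑ j, ω j * x j)
    (F : (Fin N → ℂ) → ℂ)
    (hF : ∀ z : Fin N → ℂ, F z =
      ∫ x in W, Complex.exp (-(∑ j, z j * (x j : ℂ))) *
        MvPolynomial.eval (fun j => ((x j : ℝ) : ℂ)) H)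
    (hconv : ∀ z : Fin N → ℂ,
      (∃ c > (0 : ℝ), ∀ x ∈ W, c * ‖x‖ ≤ ∑ j, (z j).re * x j) →
      IntegrableOn
        (fun x : EuclideanSpace ℝ (Fin N) =>
          Complex.exp (-(∑ j, z j * (x j : ℂ))) *
            MvPolynomial.eval (fun j => ((x j : ℝ) : ℂ)) H) W volume)
    (hdecay : ∃ C ≥ (0 : ℝ), ∃ ε > (0 : ℝ), ∃ τ₀ > (0 : ℝ), ∀ τ : ℝ, τ₀ ≤ τ →
      ‖F (fun j => ((τ * ω j : ℝ) : ℂ) +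
          Complex.I * ((Real.sqrt (τ ^ 2 + k ^ 2) * ωperp j : ℝ) : ℂ))‖ ≤
        C * τ ^ (-((n : ℝ) + N) - ε)) :
    F (fun j => ((ω j : ℝ) : ℂ) + Complex.I * ((ωperp j : ℝ) : ℂ)) = 0 := by
  obtain rfl : F = laplaceOn W H := funext hF
  obtain ⟨C, -, ε, hε, τ₀, -, hbound⟩ := hdecay
  let z : ℝ → Fin N → ℂ := fun r j => (ω j : ℂ) + Complex.I * ((r * ωperp j : ℝ) : ℂ)
  let s : ℝ → ℝ := fun τ => √(τ ^ 2 + k ^ 2) / τ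
  have hint : IntegrableOn (laplaceIntegrand H fun j => (ω j : ℂ)) W :=
    hconv _ ⟨δ, hδ, by simpa using hWω⟩
  have hcont : Continuous fun r => laplaceOn W H (z r) :=
    (continuous_laplaceOn_add_I_mul hint).comp (f := fun r j => r * ωperp j) (by fun_prop)
  have hlim : Tendsto (fun τ => laplaceOn W H (z (s τ))) atTop (𝓝 (laplaceOn W H (z 1))) :=
    hcont.continuousAt.tendsto.comp (tendsto_sqrt_sq_add_sq_div_self_atTop k)
  have hbound_z : ∀ᶠ τ in atTop, ‖laplaceOn W H (z (s τ))‖ ≤ C * τ ^ (-ε) := by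
    filter_upwards [eventually_ge_atTop τ₀, eventually_gt_atTop 0] with τ hτ₀ hτ
    have hρ : τ • z (s τ) =
        fun j => ((τ * ω j : ℝ) : ℂ) + Complex.I * ((√(τ ^ 2 + k ^ 2) * ωperp j : ℝ) : ℂ) := by
      have : (τ : ℂ) ≠ 0 := by exact_mod_cast hτ.ne'
      ext j
      simp only [z, s, Pi.smul_apply, Complex.real_smul]
      push_cast
      field_simp
    exact norm_laplaceOn_le_of_norm_laplaceOn_smul_le hWcone hH hτ (hρ ▸ hbound τ hτ₀)
  have hzero : Tendsto (fun τ => laplaceOn W H (z (s τ))) atTop (𝓝 0) :=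
    squeeze_zero_norm' hbound_z (by simpa using (tendsto_rpow_neg_atTop hε).const_mul C)
  simpa [z] using tendsto_nhds_unique hlim hzero

/-- End of Step 2 of the proof of Lemma 2.2: if the Laplace transform `F` of a
homogeneous polynomial of degree `n` over a cone `W` decays like `τ^{-(n+N)-ε}`
along the CGO directions `ρ_τ = τω + i√(τ²+k²) ω⊥`, then by homogeneity
`F(ω + iω⊥) = 0`. -/
theorem laplace_transform_vanishing
    (N : ℕ) (hN : 2 ≤ N)
    (W : Set (EuclideanSpace ℝ (Fin N))) (hWmeas : MeasurableSet W)
    (hWcone : ∀ x ∈ W, ∀ t : ℝ, 0 < t → t • x ∈ W)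
    (n : ℕ) (H : MvPolynomial (Fin N) ℂ) (hH : H.IsHomogeneous n)
    (k : ℝ) (hk : 0 ≤ k)
    (ω ωperp : EuclideanSpace ℝ (Fin N))
    (hω : ‖ω‖ = 1) (hωperp : ‖ωperp‖ = 1) (horth : ⟪ω, ωperp⟫_ℝ = 0)
    (δ : ℝ) (hδ : 0 < δ)
    (hWω : ∀ x ∈ W, δ * ‖x‖ ≤ ∑ j, ω j * x j)
    (F : (Fin N → ℂ) → ℂ)
    (hF : ∀ z : Fin N → ℂ, F z =
      ∫ x in W, Complex.exp (-(∑ j, z j * (x j : ℂ))) *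
        MvPolynomial.eval (fun j => ((x j : ℝ) : ℂ)) H)
    (hconv : ∀ z : Fin N → ℂ,
      (∃ c > (0 : ℝ), ∀ x ∈ W, c * ‖x‖ ≤ ∑ j, (z j).re * x j) →
      IntegrableOn
        (fun x : EuclideanSpace ℝ (Fin N) =>
          Complex.exp (-(∑ j, z j * (x j : ℂ))) *
            MvPolynomial.eval (fun j => ((x j : ℝ) : ℂ)) H) W volume)
    (hdecay : ∃ C ≥ (0 : ℝ), ∃ ε > (0 : ℝ), ∃ τ₀ > (0 : ℝ), ∀ τ : ℝ, τ₀ ≤ τ →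
      ‖F (fun j => ((τ * ω j : ℝ) : ℂ) +
          Complex.I * ((Real.sqrt (τ ^ 2 + k ^ 2) * ωperp j : ℝ) : ℂ))‖ ≤
        C * τ ^ (-((n : ℝ) + N) - ε)) :
    F (fun j => ((ω j : ℝ) : ℂ) + Complex.I * ((ωperp j : ℝ) : ℂ)) = 0 :=
  laplace_transform_vanishing_general N W hWcone n H hH k ω ωperp δ hδ hWω F hF hconv hdecay
end
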